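/- arXiv:2603.20929 — 3 statements merged into one kernel-verified Lean document; each statement's English description precedes it below -/
import Mathlib

section
/- Let a, b be real numbers, s* > 0 a real number, and c a complex number, and suppose the complex number λ satisfies λ = (-a + ib + c)/(s* + a + ib), where s* + a + ib ≠ 0. If |c|² + 2|c|·√(a² + b²) < (2a + s*)·s*, then |λ| < 1. -/
/-!
By the triangle inequality the numerator has modulus at most `√(a² + b²) + ‖c‖`, and the hypothesis
says exactly that the square of this bound is smaller than `(s + a)² + b²`, the squared modulus of
the denominator.
-/

open Complex

theorem norm_add_lt_of_sq_add_two_mul_lt {E : Type*} [SeminormedAddCommGroup E] {z c w : E}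
    (h : ‖c‖ ^ 2 + 2 * ‖c‖ * ‖z‖ < ‖w‖ ^ 2 - ‖z‖ ^ 2) : ‖z + c‖ < ‖w‖ := by
  have hsq : (‖z‖ + ‖c‖) ^ 2 < ‖w‖ ^ 2 := by linarith
  calc ‖z + c‖ ≤ ‖z‖ + ‖c‖ := norm_add_le z c
    _ < ‖w‖ := lt_of_pow_lt_pow_left₀ 2 (norm_nonneg w) hsq

theorem stmt_0_general (a b s : ℝ) (c lam : ℂ)
    (hlam : lam = (-(a : ℂ) + b * Complex.I + c) / ((s : ℂ) + a + b * Complex.I))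
    (hineq : ‖c‖ ^ 2 + 2 * ‖c‖ * Real.sqrt (a ^ 2 + b ^ 2)
      < (2 * a + s) * s) :
    ‖lam‖ < 1 := by
  have hnum : ‖(-(a : ℂ) + b * I)‖ = √(a ^ 2 + b ^ 2) := by
    simpa using norm_add_mul_I (-a) b
  have hden : ‖(s : ℂ) + a + b * I‖ ^ 2 = (s + a) ^ 2 + b ^ 2 := by
    rw [← ofReal_add, norm_add_mul_I, Real.sq_sqrt (by positivity)]
  have hlt : ‖-(a : ℂ) + b * I + c‖ < ‖(s : ℂ) + a + b * I‖ := by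
    refine norm_add_lt_of_sq_add_two_mul_lt ?_
    rw [hnum, hden, Real.sq_sqrt (by positivity)]
    linarith
  rw [hlam, norm_div]
  exact (div_lt_one ((norm_nonneg _).trans_lt hlt)).2 hlt

/-- Key algebraic inequality for local stability of the sequential CAVI Jacobian. -/
theorem stmt_0 (a b s : ℝ) (hs : 0 < s) (c lam : ℂ)
    (hden : (s : ℂ) + a + b * Complex.I ≠ 0)
    (hlam : lam = (-(a : ℂ) + b * Complex.I + c) / ((s : ℂ) + a + b * Complex.I))
    (hineq : ‖c‖ ^ 2 + 2 * ‖c‖ * Real.sqrt (a ^ 2 + b ^ 2)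
      < (2 * a + s) * s) :
    ‖lam‖ < 1 :=
  stmt_0_general a b s c lam hlam hineq
end

section
/- Let M be a real symmetric positive definite p×p matrix, D_α a diagonal matrix with diagonal entries in (0,1), and B a diagonal matrix with nonnegative entries. Suppose δ ∈ (0,1) satisfies, for all unit vectors y ∈ ℝᵖ: yᵀ B M² B y ≤ δ · yᵀ M y and yᵀ B² y ≤ δ · yᵀ (D_α^{-1} − I) y. Then for all unit vectors y, yᵀ B (M − I) D_α (M − I) B y ≤ δ · yᵀ (D_α^{-1} + M − I) y. -/
open Matrix

/-!
Put `x = B y`. Then the left-hand side is `((M - I) x)ᵀ D_α ((M - I) x) ≤ ‖M x - x‖²`, and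
`‖M x - x‖² = xᵀ M² x - 2 xᵀ M x + ‖x‖² ≤ xᵀ M² x + ‖x‖²` because `M` is positive semidefinite.
The two hypotheses bound `xᵀ M² x` by `δ yᵀ M y` and `‖x‖²` by `δ yᵀ (D_α⁻¹ - I) y`.
-/

namespace Matrix

variable {m n α : Type*} [Fintype m] [Fintype n]

theorem dotProduct_transpose_mul_mul_mulVec [CommSemiring α] (A : Matrix m n α)
    (C : Matrix m m α) (u : n → α) :
    u ⬝ᵥ (Aᵀ * C * A) *ᵥ u = (A *ᵥ u) ⬝ᵥ C *ᵥ (A *ᵥ u) := by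
  rw [← mulVec_mulVec, ← mulVec_mulVec, dotProduct_transpose_mulVec, dotProduct_comm]

theorem dotProduct_diagonal_mulVec_le_self [DecidableEq n] {d : n → ℝ} (hd : ∀ i, d i ≤ 1)
    (w : n → ℝ) : w ⬝ᵥ diagonal d *ᵥ w ≤ w ⬝ᵥ w := by
  simp only [dotProduct, mulVec_diagonal]
  exact Finset.sum_le_sum fun i _ ↦ by nlinarith [mul_self_nonneg (w i), hd i]

theorem PosSemidef.dotProduct_self_sub_one_mulVec_le [DecidableEq n] {M : Matrix n n ℝ}
    (hM : M.PosSemidef) (x : n → ℝ) :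
    ((M - 1) *ᵥ x) ⬝ᵥ ((M - 1) *ᵥ x) ≤ x ⬝ᵥ (M ^ 2) *ᵥ x + x ⬝ᵥ x := by
  have hMt : Mᵀ = M := isHermitian_iff_isSymm.mp hM.isHermitian
  have hsq : x ⬝ᵥ (M ^ 2) *ᵥ x = (M *ᵥ x) ⬝ᵥ (M *ᵥ x) := by
    rw [show M ^ 2 = Mᵀ * 1 * M by rw [hMt, Matrix.mul_one, sq],
      dotProduct_transpose_mul_mul_mulVec, one_mulVec]
  have hquad : 0 ≤ x ⬝ᵥ M *ᵥ x := by simpa using hM.dotProduct_mulVec_nonneg x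
  rw [hsq, sub_mulVec, one_mulVec]
  simp only [sub_dotProduct, dotProduct_sub]
  rw [dotProduct_comm (M *ᵥ x) x]
  linarith

end Matrix

theorem stmt_5_general (p : ℕ) (M : Matrix (Fin p) (Fin p) ℝ) (dα b : Fin p → ℝ)
    (hMpd : M.PosDef)
    (hdα : ∀ i, dα i ∈ Set.Ioo (0 : ℝ) 1)
    (δ : ℝ)
    (h1 : ∀ y : Fin p → ℝ, y ⬝ᵥ y = 1 →
      y ⬝ᵥ (Matrix.diagonal b * M ^ 2 * Matrix.diagonal b).mulVec y ≤ δ * (y ⬝ᵥ M.mulVec y))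
    (h2 : ∀ y : Fin p → ℝ, y ⬝ᵥ y = 1 →
      y ⬝ᵥ ((Matrix.diagonal b) ^ 2).mulVec y ≤
        δ * (y ⬝ᵥ (Matrix.diagonal (fun i => (dα i)⁻¹) - 1).mulVec y)) :
    ∀ y : Fin p → ℝ, y ⬝ᵥ y = 1 →
      y ⬝ᵥ (Matrix.diagonal b * (M - 1) * Matrix.diagonal dα * (M - 1) *
          Matrix.diagonal b).mulVec y ≤
        δ * (y ⬝ᵥ (Matrix.diagonal (fun i => (dα i)⁻¹) + M - 1).mulVec y) := by
  intro y hy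
  set B := diagonal b
  have hBt : Bᵀ = B := diagonal_transpose b
  have hMt : Mᵀ = M := isHermitian_iff_isSymm.mp hMpd.isHermitian
  have hM2 := h1 y hy
  have hB2 := h2 y hy
  have hBMB : B * M ^ 2 * B = Bᵀ * M ^ 2 * B := by rw [hBt]
  have hBB : B ^ 2 = Bᵀ * 1 * B := by rw [hBt, Matrix.mul_one, sq]
  rw [hBMB, dotProduct_transpose_mul_mul_mulVec] at hM2
  rw [hBB, dotProduct_transpose_mul_mul_mulVec, one_mulVec] at hB2
  have hlhs : B * (M - 1) * diagonal dα * (M - 1) * B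
      = ((M - 1) * B)ᵀ * diagonal dα * ((M - 1) * B) := by
    rw [transpose_mul, hBt, transpose_sub, transpose_one, hMt]
    simp only [Matrix.mul_assoc]
  have hrhs : diagonal (fun i => (dα i)⁻¹) + M - 1 = (diagonal (fun i => (dα i)⁻¹) - 1) + M := by
    abel
  rw [hlhs, dotProduct_transpose_mul_mul_mulVec, ← mulVec_mulVec, hrhs, add_mulVec,
    dotProduct_add]
  calc _ ≤ ((M - 1) *ᵥ (B *ᵥ y)) ⬝ᵥ ((M - 1) *ᵥ (B *ᵥ y)) :=
        dotProduct_diagonal_mulVec_le_self (fun i ↦ (hdα i).2.le) _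
    _ ≤ (B *ᵥ y) ⬝ᵥ (M ^ 2) *ᵥ (B *ᵥ y) + (B *ᵥ y) ⬝ᵥ (B *ᵥ y) :=
        hMpd.posSemidef.dotProduct_self_sub_one_mulVec_le _
    _ ≤ _ := by linarith

/-- Lemma A.2 of the paper. -/
theorem stmt_5 (p : ℕ) (M : Matrix (Fin p) (Fin p) ℝ) (dα b : Fin p → ℝ)
    (hM : M.IsSymm) (hMpd : M.PosDef)
    (hdα : ∀ i, dα i ∈ Set.Ioo (0 : ℝ) 1) (hb : ∀ i, 0 ≤ b i)
    (δ : ℝ) (hδ : δ ∈ Set.Ioo (0 : ℝ) 1)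
    (h1 : ∀ y : Fin p → ℝ, y ⬝ᵥ y = 1 →
      y ⬝ᵥ (Matrix.diagonal b * M ^ 2 * Matrix.diagonal b).mulVec y ≤ δ * (y ⬝ᵥ M.mulVec y))
    (h2 : ∀ y : Fin p → ℝ, y ⬝ᵥ y = 1 →
      y ⬝ᵥ ((Matrix.diagonal b) ^ 2).mulVec y ≤
        δ * (y ⬝ᵥ (Matrix.diagonal (fun i => (dα i)⁻¹) - 1).mulVec y)) :
    ∀ y : Fin p → ℝ, y ⬝ᵥ y = 1 →
      y ⬝ᵥ (Matrix.diagonal b * (M - 1) * Matrix.diagonal dα * (M - 1) *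
          Matrix.diagonal b).mulVec y ≤
        δ * (y ⬝ᵥ (Matrix.diagonal (fun i => (dα i)⁻¹) + M - 1).mulVec y) :=
  stmt_5_general p M dα b hMpd hdα δ h1 h2
end

section
/- For a chi-squared random variable Z with n degrees of freedom and any t > 0, P(Z − n ≥ 2√(nt) + 2t) ≤ e^{−t} and P(n − Z ≥ 2√(nt)) ≤ e^{−t}. -/
/-! Chernoff's bound with the moment generating function of the gamma law: for `λ < r`,
`e^{λx}` times the `Γ(a, r)` density is `(r / (r - λ))^a` times the `Γ(a, r - λ)` density.
For the chi-squared law (`a = n / 2`, `r = 1 / 2`) write `t = n θ²`; the tilts `λ = θ / (1 + 2θ)`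
and `λ = -θ`, combined with `x - x² / 2 ≤ log (1 + x) ≤ sinh (log (1 + x))`, give exactly
`e^{-t}` for the upper and the lower tail. -/

open MeasureTheory ProbabilityTheory Real

lemma log_one_add_le_mul_div {x : ℝ} (hx : 0 ≤ x) :
    log (1 + x) ≤ x * (x + 2) / (2 * (1 + x)) := by
  have h1x : 0 < 1 + x := by linarith
  calc log (1 + x) ≤ sinh (log (1 + x)) :=
        self_le_sinh_iff.mpr (log_nonneg (by linarith))
    _ = x * (x + 2) / (2 * (1 + x)) := by
        rw [sinh_log h1x]; field_simp; ring

lemma sub_sq_div_two_le_log_one_add {x : ℝ} (hx : 0 ≤ x) : x - x ^ 2 / 2 ≤ log (1 + x) := by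
  refine le_trans ?_ (le_log_one_add_of_nonneg hx)
  rw [le_div_iff₀ (by linarith)]
  nlinarith [pow_nonneg hx 3]

lemma gammaPDF_mul_ofReal_exp_mul {a r l : ℝ} (hr : 0 ≤ r) (hl : l < r) (x : ℝ) :
    gammaPDF a r x * ENNReal.ofReal (exp (l * x)) =
      ENNReal.ofReal ((r / (r - l)) ^ a) * gammaPDF a (r - l) x := by
  rcases lt_or_ge x 0 with hx | hx
  · simp [gammaPDF_of_neg hx]
  have hrl : 0 < r - l := by linarith
  rw [gammaPDF_of_nonneg hx, gammaPDF_of_nonneg hx, ← ENNReal.ofReal_mul' (exp_pos _).le,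
    ← ENNReal.ofReal_mul (by positivity), div_rpow hr hrl.le,
    show -((r - l) * x) = -(r * x) + l * x by ring, exp_add]
  have : (r - l) ^ a ≠ 0 := (rpow_pos_of_pos hrl a).ne'
  congr 1
  field_simp

lemma lintegral_exp_mul_gammaMeasure {a r l : ℝ} (ha : 0 < a) (hr : 0 ≤ r) (hl : l < r) :
    ∫⁻ x, ENNReal.ofReal (exp (l * x)) ∂gammaMeasure a r = ENNReal.ofReal ((r / (r - l)) ^ a) := by
  have hpdf (r : ℝ) : Measurable (gammaPDF a r) := (measurable_gammaPDFReal a r).ennreal_ofReal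
  rw [gammaMeasure, lintegral_withDensity_eq_lintegral_mul _ (hpdf r) (by fun_prop)]
  simp only [Pi.mul_apply, gammaPDF_mul_ofReal_exp_mul hr hl]
  rw [lintegral_const_mul _ (hpdf _), lintegral_gammaPDF_eq_one ha (by linarith), mul_one]

lemma measure_ge_le_exp_neg_mul_lintegral_exp {Ω : Type*} [MeasurableSpace Ω] (μ : Measure Ω)
    {X : Ω → ℝ} (hX : Measurable X) (l c : ℝ) :
    μ {ω | c ≤ l * X ω} ≤
      ENNReal.ofReal (exp (-c)) * ∫⁻ x, ENNReal.ofReal (exp (l * x)) ∂μ.map X := by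
  have hset : {ω | c ≤ l * X ω} =
      {ω | ENNReal.ofReal (exp c) ≤ ENNReal.ofReal (exp (l * X ω))} := by
    ext ω
    simp [ENNReal.ofReal_le_ofReal_iff (exp_pos _).le]
  rw [hset, lintegral_map (by fun_prop) hX, mul_comm, exp_neg,
    ENNReal.ofReal_inv_of_pos (exp_pos c), ← div_eq_mul_inv]
  exact meas_ge_le_lintegral_div (by fun_prop) (by simp [exp_pos]) ENNReal.ofReal_ne_top

lemma measure_ge_le_of_map_eq_gammaMeasure {Ω : Type*} [MeasurableSpace Ω] (μ : Measure Ω)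
    {X : Ω → ℝ} (hX : Measurable X) {a r : ℝ} (ha : 0 < a) (hr : 0 ≤ r)
    (hXa : μ.map X = gammaMeasure a r) {l : ℝ} (hl : l < r) (c : ℝ) :
    μ {ω | c ≤ l * X ω} ≤ ENNReal.ofReal (exp (-c) * (r / (r - l)) ^ a) := by
  have := measure_ge_le_exp_neg_mul_lintegral_exp μ hX l c
  rwa [hXa, lintegral_exp_mul_gammaMeasure ha hr hl, ← ENNReal.ofReal_mul (exp_pos _).le] at this

lemma chiSquared_upper_tail {Ω : Type*} [MeasurableSpace Ω] (μ : Measure Ω) {n : ℝ} (hn : 0 < n)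
    {Z : Ω → ℝ} (hZ : Measurable Z) (hZn : μ.map Z = gammaMeasure (n / 2) (1 / 2))
    {θ : ℝ} (hθ : 0 ≤ θ) :
    μ {ω | n * (1 + 2 * θ + 2 * θ ^ 2) ≤ Z ω} ≤ ENNReal.ofReal (exp (-(n * θ ^ 2))) := by
  set l := θ / (1 + 2 * θ)
  set c := n * (1 + 2 * θ + 2 * θ ^ 2)
  have hl : l < 1 / 2 := by rw [div_lt_iff₀ (by positivity)]; linarith
  have hbase : 1 / 2 / (1 / 2 - l) = 1 + 2 * θ := by
    simp only [l]; field_simp; ring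
  have hexponent : -(l * c) + log (1 + 2 * θ) * (n / 2) ≤ -(n * θ ^ 2) :=
    calc -(l * c) + log (1 + 2 * θ) * (n / 2)
        ≤ -(l * c) + 2 * θ * (2 * θ + 2) / (2 * (1 + 2 * θ)) * (n / 2) := by
          gcongr; exact log_one_add_le_mul_div (by positivity)
      _ = -(n * θ ^ 2) := by simp only [l, c]; field_simp; ring
  calc μ {ω | c ≤ Z ω} ≤ μ {ω | l * c ≤ l * Z ω} :=
        measure_mono fun ω hω => mul_le_mul_of_nonneg_left hω (div_nonneg hθ (by positivity))
    _ ≤ ENNReal.ofReal (exp (-(l * c)) * (1 / 2 / (1 / 2 - l)) ^ (n / 2)) :=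
        measure_ge_le_of_map_eq_gammaMeasure μ hZ (by positivity) (by norm_num) hZn hl _
    _ ≤ ENNReal.ofReal (exp (-(n * θ ^ 2))) := by
        gcongr
        rwa [hbase, rpow_def_of_pos (by positivity), ← exp_add, exp_le_exp]

lemma chiSquared_lower_tail {Ω : Type*} [MeasurableSpace Ω] (μ : Measure Ω) {n : ℝ} (hn : 0 < n)
    {Z : Ω → ℝ} (hZ : Measurable Z) (hZn : μ.map Z = gammaMeasure (n / 2) (1 / 2))
    {θ : ℝ} (hθ : 0 ≤ θ) :
    μ {ω | Z ω ≤ n * (1 - 2 * θ)} ≤ ENNReal.ofReal (exp (-(n * θ ^ 2))) := by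
  set c := n * (1 - 2 * θ)
  have hbase : 1 / 2 / (1 / 2 - -θ) = (1 + 2 * θ)⁻¹ := by
    rw [div_eq_iff (by linarith)]; field_simp; ring
  have hexponent : -(-θ * c) + -(log (1 + 2 * θ) * (n / 2)) ≤ -(n * θ ^ 2) :=
    calc -(-θ * c) + -(log (1 + 2 * θ) * (n / 2))
        ≤ -(-θ * c) + -((2 * θ - (2 * θ) ^ 2 / 2) * (n / 2)) := by
          gcongr; exact sub_sq_div_two_le_log_one_add (by positivity)
      _ = -(n * θ ^ 2) := by ring
  calc μ {ω | Z ω ≤ c} ≤ μ {ω | -θ * c ≤ -θ * Z ω} :=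
        measure_mono fun ω hω => mul_le_mul_of_nonpos_left hω (neg_nonpos.mpr hθ)
    _ ≤ ENNReal.ofReal (exp (-(-θ * c)) * (1 / 2 / (1 / 2 - -θ)) ^ (n / 2)) :=
        measure_ge_le_of_map_eq_gammaMeasure μ hZ (by positivity) (by norm_num) hZn
          (by linarith) _
    _ ≤ ENNReal.ofReal (exp (-(n * θ ^ 2))) := by
        gcongr
        rwa [hbase, inv_rpow (by positivity), rpow_def_of_pos (by positivity), ← exp_neg,
          ← exp_add, exp_le_exp]

theorem stmt_14_general {Ω : Type*} [MeasurableSpace Ω] (μ : Measure Ω)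
    (n : ℕ) (hn : 0 < n) (Z : Ω → ℝ) (hZmeas : Measurable Z)
    (hZ : μ.map Z = gammaMeasure ((n : ℝ) / 2) (1 / 2)) (t : ℝ) (ht : 0 < t) :
    μ {ω | 2 * Real.sqrt (n * t) + 2 * t ≤ Z ω - n} ≤ ENNReal.ofReal (Real.exp (-t)) ∧
    μ {ω | 2 * Real.sqrt (n * t) ≤ (n : ℝ) - Z ω} ≤ ENNReal.ofReal (Real.exp (-t)) := by
  have hn' : (0 : ℝ) < n := Nat.cast_pos.mpr hn
  set θ := √(t / n)
  have hθ : 0 ≤ θ := sqrt_nonneg _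
  have ht_eq : t = n * θ ^ 2 := by rw [sq_sqrt (by positivity)]; field_simp
  have hsqrt : √(n * t) = n * θ := by
    rw [ht_eq, show (n : ℝ) * (n * θ ^ 2) = (n * θ) ^ 2 by ring, sqrt_sq (by positivity)]
  rw [hsqrt, ht_eq]
  constructor
  · refine (measure_mono fun ω hω => ?_).trans (chiSquared_upper_tail μ hn' hZmeas hZ hθ)
    simp only [Set.mem_ofPred_eq] at hω ⊢
    linarith
  · refine (measure_mono fun ω hω => ?_).trans (chiSquared_lower_tail μ hn' hZmeas hZ hθ)
    simp only [Set.mem_ofPred_eq] at hω ⊢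
    linarith

/-- Laurent–Massart concentration inequality for a chi-squared random variable with `n`
degrees of freedom (chi-squared = Gamma(n/2, 1/2)). -/
theorem stmt_14 {Ω : Type*} [MeasurableSpace Ω] (μ : Measure Ω) [IsProbabilityMeasure μ]
    (n : ℕ) (hn : 0 < n) (Z : Ω → ℝ) (hZmeas : Measurable Z)
    (hZ : μ.map Z = gammaMeasure ((n : ℝ) / 2) (1 / 2)) (t : ℝ) (ht : 0 < t) :
    μ {ω | 2 * Real.sqrt (n * t) + 2 * t ≤ Z ω - n} ≤ ENNReal.ofReal (Real.exp (-t)) ∧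
    μ {ω | 2 * Real.sqrt (n * t) ≤ (n : ℝ) - Z ω} ≤ ENNReal.ofReal (Real.exp (-t)) :=
  stmt_14_general μ n hn Z hZmeas hZ t ht
end
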